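/- Let p be a prime ≥ 5, F the free group on two generators, and n ≥ 2. Then G = F/λ_n(F) is a Beauville group. Explicitly, for n ≥ 3, if u, v denote the images of the free generators, then {u, v} and {uv², uv⁴} form a Beauville structure for G. -/

import Mathlib

/-- The subgroup generated by `m`-th powers of elements of `H`. -/
def pPow {G : Type*} [Group G] (H : Subgroup G) (m : ℕ) : Subgroup G :=
  Subgroup.closure {x : G | ∃ h ∈ H, x = h ^ m}

/-- The `p`-central series: `lam p 1 = ⊤` and `lam p (n+1) = [lam p n, G] ⊔ (lam p n)^p`.
    (We also set `lam p 0 = ⊤`.) -/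
def lam {G : Type*} [Group G] (p : ℕ) : ℕ → Subgroup G
  | 0 => ⊤
  | 1 => ⊤
  | (n+2) => ⁅(lam p (n+1) : Subgroup G), (⊤ : Subgroup G)⁆ ⊔ pPow (lam p (n+1)) p

theorem pPow_normal {G : Type*} [Group G] (H : Subgroup G) [hH : H.Normal] (m : ℕ) :
    (pPow H m).Normal := by
  have key : ∀ x ∈ pPow H m, ∀ g : G, g * x * g⁻¹ ∈ pPow H m := by
    intro x hx
    induction hx using Subgroup.closure_induction with
    | mem y hy =>
        intro g
        obtain ⟨h, hh, rfl⟩ := hy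
        refine Subgroup.subset_closure ⟨g * h * g⁻¹, hH.conj_mem h hh g, ?_⟩
        exact conj_pow.symm
    | one => intro g; simpa using (pPow H m).one_mem
    | mul x y hx hy ihx ihy =>
        intro g
        have h2 := mul_mem (ihx g) (ihy g)
        have : g * x * g⁻¹ * (g * y * g⁻¹) = g * (x * y) * g⁻¹ := by group
        rwa [this] at h2
    | inv x hx ihx =>
        intro g
        have h2 := inv_mem (ihx g)
        have : (g * x * g⁻¹)⁻¹ = g * x⁻¹ * g⁻¹ := by group
        rwa [this] at h2
  exact ⟨fun x hx g => key x hx g⟩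

theorem lam_normal' {G : Type*} [Group G] (p : ℕ) : ∀ n, (lam (G := G) p n).Normal
  | 0 => inferInstanceAs (⊤ : Subgroup G).Normal
  | 1 => inferInstanceAs (⊤ : Subgroup G).Normal
  | (n+2) => by
      haveI := lam_normal' (G := G) p (n+1)
      haveI := pPow_normal (lam (G := G) p (n+1)) p
      show (⁅(lam p (n+1) : Subgroup G), (⊤ : Subgroup G)⁆ ⊔ pPow (lam p (n+1)) p).Normal
      infer_instance

instance lam_normal {G : Type*} [Group G] (p n : ℕ) : (lam (G := G) p n).Normal :=
  lam_normal' p n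

/-- The union of all conjugates of the cyclic subgroup generated by `x`. -/
def conjClosure {G : Type*} [Group G] (x : G) : Set G :=
  ⋃ g : G, (fun h => g⁻¹ * h * g) '' (Subgroup.zpowers x : Set G)

/-- `Σ(x,y)`: the union of all conjugates of `⟨x⟩`, `⟨y⟩` and `⟨xy⟩`. -/
def SigmaSet {G : Type*} [Group G] (x y : G) : Set G :=
  conjClosure x ∪ conjClosure y ∪ conjClosure (x * y)

/-- `{x₁,y₁}` and `{x₂,y₂}` form a Beauville structure for `G`. -/
def IsBeauvilleStructure {G : Type*} [Group G] (x₁ y₁ x₂ y₂ : G) : Prop :=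
  Subgroup.closure {x₁, y₁} = ⊤ ∧ Subgroup.closure {x₂, y₂} = ⊤ ∧
    SigmaSet x₁ y₁ ∩ SigmaSet x₂ y₂ = {1}

/-- A Beauville group: a finite nontrivial (2-generated) group admitting a Beauville
structure. -/
def IsBeauvilleGroup (G : Type*) [Group G] : Prop :=
  Finite G ∧ Nontrivial G ∧ ∃ x₁ y₁ x₂ y₂ : G, IsBeauvilleStructure x₁ y₁ x₂ y₂

/-!
Write `ab : F → ℤ²` for the abelianization. If `p ^ k ∣ i` then `x ^ i ∈ λ_{k+1}`; the image
under `ab` of `λ_{k+1}` lies in `p ^ k ℤ²`; and `λ_{k+1} / λ_{k+2}` is central. So if a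
conjugate of `x ^ i` equals a conjugate of `y ^ j` in `F / λ_n`, where `p ^ k` divides `i` and
`j` and `k + 2 ≤ n`, then `x ^ i ≡ y ^ j` modulo `λ_{k+2}` and `i • ab x ≡ j • ab y` modulo
`p ^ (k + 1)`. When `ab x` and `ab y` are independent modulo `p`, this forces `p ^ (k + 1)` to
divide `i` and `j`; raising `k` until `k + 1 ≥ n` shows that the common element is trivial.
For the nine pairs taken from `{u, v, uv}` and `{uv², uv⁴, uv²uv⁴}` the determinants divide 12,
hence are prime to `p ≥ 5`.

`F / λ_n` is finite because each `λ_k / λ_{k+1}` is a finitely generated abelian group of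
exponent `p`.
-/

open scoped commutatorElement

section PCentralSeries

variable {G H : Type*} [Group G] [Group H] {p : ℕ}

lemma pPow_le (K : Subgroup G) (m : ℕ) : pPow K m ≤ K := by
  rw [pPow, Subgroup.closure_le]
  rintro _ ⟨h, hh, rfl⟩
  exact pow_mem hh m

lemma pPow_mono {K L : Subgroup G} (h : K ≤ L) (m : ℕ) : pPow K m ≤ pPow L m :=
  Subgroup.closure_mono fun _ ⟨k, hk, e⟩ => ⟨k, h hk, e⟩

lemma map_pPow (f : G →* H) (K : Subgroup G) (m : ℕ) :
    (pPow K m).map f = pPow (K.map f) m := by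
  rw [pPow, pPow, MonoidHom.map_closure]
  congr 1
  ext x
  constructor
  · rintro ⟨_, ⟨h, hh, rfl⟩, rfl⟩
    exact ⟨f h, ⟨h, hh, rfl⟩, map_pow f h m⟩
  · rintro ⟨_, ⟨h, hh, rfl⟩, rfl⟩
    exact ⟨h ^ m, ⟨h, hh, rfl⟩, map_pow f h m⟩

lemma lam_succ_succ (p k : ℕ) :
    lam (G := G) p (k + 2) = ⁅(lam p (k + 1) : Subgroup G), ⊤⁆ ⊔ pPow (lam p (k + 1)) p :=
  rfl

lemma lam_succ_le (p k : ℕ) : lam (G := G) p (k + 1) ≤ lam p k := by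
  rcases k with _ | k
  · exact le_top
  · rw [lam_succ_succ]
    exact sup_le (Subgroup.commutator_le_left _ _) (pPow_le _ _)

lemma lam_antitone (p : ℕ) : Antitone (lam (G := G) p) :=
  antitone_nat_of_succ_le (lam_succ_le p)

lemma pow_mem_lam_succ {x : G} {k : ℕ} (hx : x ∈ lam p (k + 1)) : x ^ p ∈ lam p (k + 2) :=
  Subgroup.mem_sup_right (Subgroup.subset_closure ⟨x, hx, rfl⟩)

lemma pow_pow_mem_lam (x : G) : ∀ k, x ^ p ^ k ∈ lam (G := G) p (k + 1)
  | 0 => Subgroup.mem_top _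
  | k + 1 => by
      rw [pow_succ, pow_mul]
      exact pow_mem_lam_succ (pow_pow_mem_lam x k)

lemma zpow_mem_lam (x : G) {k : ℕ} {i : ℤ} (hi : (p : ℤ) ^ k ∣ i) : x ^ i ∈ lam p (k + 1) := by
  obtain ⟨i, rfl⟩ := hi
  rw [zpow_mul, ← Nat.cast_pow, zpow_natCast]
  exact zpow_mem (pow_pow_mem_lam x k) i

lemma mk_conj_eq_mk {h : G} {k : ℕ} (hh : h ∈ lam p (k + 1)) (c : G) :
    (QuotientGroup.mk (c⁻¹ * h * c) : G ⧸ lam p (k + 2)) = QuotientGroup.mk h := by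
  rw [QuotientGroup.eq]
  have : (c⁻¹ * h * c)⁻¹ * h = ⁅c⁻¹, h⁻¹⁆ := by group
  rw [this, lam_succ_succ, ← Subgroup.commutator_comm]
  exact Subgroup.mem_sup_left
    (Subgroup.commutator_mem_commutator (Subgroup.mem_top _) (inv_mem hh))

lemma map_lam_le (f : G →* H) (p : ℕ) : ∀ k, (lam p k).map f ≤ lam p k
  | 0 => le_top
  | 1 => le_top
  | k + 2 => by
      rw [lam_succ_succ, lam_succ_succ, Subgroup.map_sup, Subgroup.map_commutator, map_pPow]
      exact sup_le_sup (Subgroup.commutator_mono (map_lam_le f p (k + 1)) le_top)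
        (pPow_mono (map_lam_le f p (k + 1)) p)

lemma lam_le_range_powMonoidHom {A : Type*} [CommGroup A] (p : ℕ) :
    ∀ k, lam (G := A) p (k + 1) ≤ (powMonoidHom (p ^ k)).range
  | 0 => fun x _ => ⟨x, pow_one x⟩
  | k + 1 => by
      rw [lam_succ_succ, Subgroup.commutator_eq_bot_iff_le_centralizer.mpr
        (fun x _ y _ => mul_comm y x), bot_sup_eq, pPow, Subgroup.closure_le]
      rintro _ ⟨x, hx, rfl⟩
      obtain ⟨y, rfl⟩ := lam_le_range_powMonoidHom p k hx
      exact ⟨y, by simp [pow_succ, pow_mul]⟩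

lemma dvd_toAdd_of_mem_lam (f : G →* Multiplicative (ℤ × ℤ)) {w : G} {k : ℕ}
    (hw : w ∈ lam p (k + 1)) :
    (p : ℤ) ^ k ∣ (Multiplicative.toAdd (f w)).1 ∧
      (p : ℤ) ^ k ∣ (Multiplicative.toAdd (f w)).2 := by
  obtain ⟨y, hy⟩ := lam_le_range_powMonoidHom p k (map_lam_le f p (k + 1) ⟨w, hw, rfl⟩)
  rw [← hy]
  simp

end PCentralSeries

section Finiteness

variable {G : Type*} [Group G]

open IsMulCommutative in
lemma finite_quotient_of_central_of_pow_mem [Group.FG G] {N M : Subgroup G} [N.Normal]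
    [M.Normal] [Finite (G ⧸ M)] (hNM : N ≤ M) (hcomm : ⁅M, ⊤⁆ ≤ N) {m : ℕ} (hm : 0 < m)
    (hpow : ∀ x ∈ M, x ^ m ∈ N) : Finite (G ⧸ N) := by
  set K : Subgroup (G ⧸ N) := M.map (QuotientGroup.mk' N)
  have : Finite ((G ⧸ N) ⧸ K) :=
    .of_equiv _ (QuotientGroup.quotientQuotientEquivQuotient N M hNM).toEquiv.symm
  have : K.FiniteIndex := K.finiteIndex_of_finite_quotient
  have : IsMulCommutative K := by
    refine ⟨⟨?_⟩⟩
    rintro ⟨_, x, hx, rfl⟩ ⟨_, y, hy, rfl⟩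
    refine Subtype.ext ((QuotientGroup.mk'_eq_mk' N).mpr ⟨⁅y⁻¹, x⁻¹⁆, ?_, by group⟩)
    exact hcomm (Subgroup.commutator_mem_commutator (inv_mem hy) (Subgroup.mem_top _))
  have hK : IsMulTorsion K := by
    rintro ⟨_, x, hx, rfl⟩
    refine isOfFinOrder_iff_pow_eq_one.mpr ⟨m, hm, Subtype.ext ?_⟩
    exact (QuotientGroup.eq_one_iff _).mpr (hpow x hx)
  have : Finite K := CommGroup.finite_of_fg_isMulTorsion K hK
  exact .of_equiv _ (Subgroup.groupEquivQuotientProdSubgroup (s := K)).symm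

lemma finite_quotient_lam [Group.FG G] {p : ℕ} (hp : 0 < p) : ∀ n, Finite (G ⧸ lam p n)
  | 0 | 1 => @Finite.of_subsingleton _ (QuotientGroup.subsingleton_quotient_top)
  | n + 2 =>
      have := finite_quotient_lam hp (n + 1)
      finite_quotient_of_central_of_pow_mem (lam_succ_le p (n + 1)) le_sup_left hp
        fun _ hx => pow_mem_lam_succ hx

end Finiteness

section Disjointness

lemma one_mem_conjClosure {G : Type*} [Group G] (x : G) : 1 ∈ conjClosure x :=
  Set.mem_iUnion.mpr ⟨1, 1, one_mem _, by simp⟩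

def det2 {R : Type*} [CommRing R] (v w : R × R) : R := v.1 * w.2 - v.2 * w.1

lemma Prime.dvd_and_dvd_of_not_dvd_det2 {R : Type*} [CommRing R] {q : R} (hq : Prime q)
    {v w : R × R} (hdet : ¬ q ∣ det2 v w) {i j : R}
    (h₁ : q ∣ i * v.1 - j * w.1) (h₂ : q ∣ i * v.2 - j * w.2) : q ∣ i ∧ q ∣ j := by
  have hi : i * det2 v w = w.2 * (i * v.1 - j * w.1) - w.1 * (i * v.2 - j * w.2) := by
    unfold det2; ring
  have hj : j * det2 v w = v.2 * (i * v.1 - j * w.1) - v.1 * (i * v.2 - j * w.2) := by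
    unfold det2; ring
  refine ⟨(hq.dvd_or_dvd ?_).resolve_right hdet, (hq.dvd_or_dvd ?_).resolve_right hdet⟩
  · rw [hi]; exact dvd_sub (h₁.mul_left _) (h₂.mul_left _)
  · rw [hj]; exact dvd_sub (h₁.mul_left _) (h₂.mul_left _)

lemma mk_conj_eq_one {G : Type*} [Group G] {N : Subgroup G} [N.Normal] {h : G} (hh : h ∈ N)
    (c : G) : (QuotientGroup.mk (c⁻¹ * h * c) : G ⧸ N) = 1 := by
  rw [QuotientGroup.eq_one_iff]
  simpa using Subgroup.Normal.conj_mem ‹_› h hh c⁻¹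

lemma exists_eq_mk_conj_of_mem_conjClosure {G : Type*} [Group G] {N : Subgroup G} [N.Normal]
    {x : G} {g : G ⧸ N} (hg : g ∈ conjClosure (QuotientGroup.mk x : G ⧸ N)) :
    ∃ (c : G) (i : ℤ), g = QuotientGroup.mk (c⁻¹ * x ^ i * c) := by
  obtain ⟨_, ⟨c, rfl⟩, _, ⟨i, rfl⟩, rfl⟩ := hg
  obtain ⟨c, rfl⟩ := QuotientGroup.mk_surjective c
  exact ⟨c, i, rfl⟩

variable {G : Type*} [Group G] (f : G →* Multiplicative (ℤ × ℤ)) {p : ℕ} (hp : p.Prime)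
  {x y : G} (hdet : ¬ (p : ℤ) ∣ det2 (Multiplicative.toAdd (f x)) (Multiplicative.toAdd (f y)))
include hp hdet

lemma pow_succ_dvd_of_mk_conj_eq {k : ℕ} {i j : ℤ} (hi : (p : ℤ) ^ k ∣ i)
    (hj : (p : ℤ) ^ k ∣ j) {c e : G}
    (h : (QuotientGroup.mk (c⁻¹ * x ^ i * c) : G ⧸ lam p (k + 2)) =
      QuotientGroup.mk (e⁻¹ * y ^ j * e)) :
    (p : ℤ) ^ (k + 1) ∣ i ∧ (p : ℤ) ^ (k + 1) ∣ j := by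
  rw [mk_conj_eq_mk (zpow_mem_lam x hi), mk_conj_eq_mk (zpow_mem_lam y hj),
    QuotientGroup.eq] at h
  obtain ⟨h₁, h₂⟩ := dvd_toAdd_of_mem_lam f h
  obtain ⟨i, rfl⟩ := hi
  obtain ⟨j, rfl⟩ := hj
  have hpk : (p : ℤ) ^ k ≠ 0 := pow_ne_zero k (by exact_mod_cast hp.ne_zero)
  have cancel : ∀ z : ℤ, (p : ℤ) ^ (k + 1) ∣ (p : ℤ) ^ k * z → (p : ℤ) ∣ z := fun z hz =>
    (mul_dvd_mul_iff_left hpk).mp (by rwa [← pow_succ])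
  simp only [map_mul, map_inv, map_zpow, toAdd_mul, toAdd_inv, toAdd_zpow, Prod.fst_add,
    Prod.snd_add, Prod.fst_neg, Prod.snd_neg, Prod.smul_fst, Prod.smul_snd, smul_eq_mul] at h₁ h₂
  obtain ⟨hi, hj⟩ := (Nat.prime_iff_prime_int.mp hp).dvd_and_dvd_of_not_dvd_det2
    (i := i) (j := j) hdet (cancel _ ((dvd_neg.mpr h₁).trans (dvd_of_eq (by ring))))
    (cancel _ ((dvd_neg.mpr h₂).trans (dvd_of_eq (by ring))))
  rw [pow_succ]
  exact ⟨mul_dvd_mul_left _ hi, mul_dvd_mul_left _ hj⟩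

lemma mk_conj_eq_one_of_mk_conj_eq {n : ℕ} :
    ∀ d k : ℕ, n ≤ k + 1 + d → ∀ {i j : ℤ}, (p : ℤ) ^ k ∣ i → (p : ℤ) ^ k ∣ j → ∀ {c e : G},
      (QuotientGroup.mk (c⁻¹ * x ^ i * c) : G ⧸ lam p n) = QuotientGroup.mk (e⁻¹ * y ^ j * e) →
      (QuotientGroup.mk (c⁻¹ * x ^ i * c) : G ⧸ lam p n) = 1 := by
  intro d
  induction d with
  | zero =>
    intro k hk i j hi _ c _ _
    exact mk_conj_eq_one (lam_antitone p hk (zpow_mem_lam x hi)) c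
  | succ d ih =>
    intro k hk i j hi hj c e h
    by_cases hkn : n ≤ k + 1
    · exact mk_conj_eq_one (lam_antitone p hkn (zpow_mem_lam x hi)) c
    have hle : lam p n ≤ lam (G := G) p (k + 2) := lam_antitone p (by omega)
    have h' := QuotientGroup.eq.mpr (hle (QuotientGroup.eq.mp h))
    obtain ⟨hi', hj'⟩ := pow_succ_dvd_of_mk_conj_eq f hp hdet hi hj h'
    exact ih (k + 1) (by omega) hi' hj' h

lemma eq_one_of_mem_conjClosure_mk {n : ℕ} {g : G ⧸ lam p n}
    (hx : g ∈ conjClosure (QuotientGroup.mk x : G ⧸ lam p n))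
    (hy : g ∈ conjClosure (QuotientGroup.mk y : G ⧸ lam p n)) : g = 1 := by
  obtain ⟨c, i, rfl⟩ := exists_eq_mk_conj_of_mem_conjClosure hx
  obtain ⟨e, j, hj⟩ := exists_eq_mk_conj_of_mem_conjClosure hy
  exact mk_conj_eq_one_of_mk_conj_eq f hp hdet n 0 (by omega) (by simp) (by simp) hj

end Disjointness

lemma SigmaSet_mk_inter_eq_one {G : Type*} [Group G] (f : G →* Multiplicative (ℤ × ℤ))
    {p : ℕ} (hp : p.Prime) {n : ℕ} {x₁ y₁ x₂ y₂ : G}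
    (hdet : ∀ a ∈ ({x₁, y₁, x₁ * y₁} : Set G), ∀ b ∈ ({x₂, y₂, x₂ * y₂} : Set G),
      ¬ (p : ℤ) ∣ det2 (Multiplicative.toAdd (f a)) (Multiplicative.toAdd (f b))) :
    SigmaSet (QuotientGroup.mk x₁ : G ⧸ lam p n) (QuotientGroup.mk y₁) ∩
      SigmaSet (QuotientGroup.mk x₂) (QuotientGroup.mk y₂) = {1} := by
  have one_mem (x y : G ⧸ lam p n) : 1 ∈ SigmaSet x y := .inl (.inl (one_mem_conjClosure x))
  have mem_SigmaSet {g : G ⧸ lam p n} {x y : G}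
      (hg : g ∈ SigmaSet (QuotientGroup.mk x) (QuotientGroup.mk y)) :
      ∃ a ∈ ({x, y, x * y} : Set G), g ∈ conjClosure (QuotientGroup.mk a : G ⧸ lam p n) := by
    rcases hg with (hg | hg) | hg
    exacts [⟨x, .inl rfl, hg⟩, ⟨y, .inr (.inl rfl), hg⟩, ⟨x * y, .inr (.inr rfl), hg⟩]
  refine Set.eq_singleton_iff_unique_mem.mpr ⟨⟨one_mem _ _, one_mem _ _⟩, ?_⟩
  rintro g ⟨h₁, h₂⟩
  obtain ⟨a, ha, hga⟩ := mem_SigmaSet h₁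
  obtain ⟨b, hb, hgb⟩ := mem_SigmaSet h₂
  exact eq_one_of_mem_conjClosure_mk f hp (hdet a ha b hb) hga hgb

lemma closure_pair_le_closure_mul_sq_mul_pow_four {G : Type*} [Group G] {u v : G} {m : ℕ}
    (hm : Odd m) (hv : v ^ m = 1) :
    Subgroup.closure {u, v} ≤ Subgroup.closure {u * v ^ 2, u * v ^ 4} := by
  set K := Subgroup.closure {u * v ^ 2, u * v ^ 4}
  have h₂ : u * v ^ 2 ∈ K := Subgroup.subset_closure (.inl rfl)
  have h₄ : u * v ^ 4 ∈ K := Subgroup.subset_closure (.inr rfl)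
  have hsq : v ^ 2 ∈ K := by
    convert mul_mem (inv_mem h₂) h₄ using 1
    group
  obtain ⟨r, rfl⟩ := hm
  have hv' : v ∈ K := by
    convert pow_mem hsq (r + 1) using 1
    rw [← pow_mul, mul_add, mul_one, pow_succ, hv, one_mul]
  have hu : u ∈ K := by
    convert mul_mem h₂ (inv_mem hsq) using 1
    group
  rw [Subgroup.closure_le]
  rintro _ (rfl | rfl)
  exacts [hu, hv']

lemma Nat.Prime.not_dvd_of_dvd_twelve {p : ℕ} (hp : p.Prime) (hp5 : 5 ≤ p) {D : ℤ}
    (hD : D ∣ 12) : ¬ (p : ℤ) ∣ D := by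
  intro h
  have h12 : p ∣ 12 := by exact_mod_cast h.trans hD
  have := Nat.le_of_dvd (by norm_num) h12
  interval_cases p <;> first | omega | norm_num at hp

def abelianize : FreeGroup (Fin 2) →* Multiplicative (ℤ × ℤ) :=
  FreeGroup.lift ![.ofAdd (1, 0), .ofAdd (0, 1)]

lemma closure_mk_of_eq_top (N : Subgroup (FreeGroup (Fin 2))) [N.Normal] :
    Subgroup.closure {(QuotientGroup.mk (FreeGroup.of 0) : FreeGroup (Fin 2) ⧸ N),
      QuotientGroup.mk (FreeGroup.of 1)} = ⊤ := by
  have : {(QuotientGroup.mk (FreeGroup.of 0) : FreeGroup (Fin 2) ⧸ N),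
      QuotientGroup.mk (FreeGroup.of 1)} = QuotientGroup.mk' N '' Set.range FreeGroup.of := by
    ext
    simp [Fin.exists_fin_two, eq_comm]
  rw [this, ← MonoidHom.map_closure, FreeGroup.closure_range_of,
    Subgroup.map_top_of_surjective _ (QuotientGroup.mk'_surjective N)]

/-- For `p ≥ 5` and `n ≥ 2`, `G = F/λ_n(F)` (`F` free of rank 2) is a Beauville group;
explicitly, for `n ≥ 3`, if `u, v` are the images of the free generators then
`{u, v}` and `{uv², uv⁴}` form a Beauville structure for `G`. -/
theorem statement_6 (p n : ℕ) (hp : p.Prime) (hp5 : 5 ≤ p) (hn : 2 ≤ n) :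
    IsBeauvilleGroup (FreeGroup (Fin 2) ⧸ lam p n) ∧
    (3 ≤ n →
      let u : FreeGroup (Fin 2) ⧸ lam p n := QuotientGroup.mk (FreeGroup.of 0)
      let v : FreeGroup (Fin 2) ⧸ lam p n := QuotientGroup.mk (FreeGroup.of 1)
      IsBeauvilleStructure u v (u * v ^ 2) (u * v ^ 4)) := by
  set u : FreeGroup (Fin 2) ⧸ lam p n := QuotientGroup.mk (FreeGroup.of 0)
  set v : FreeGroup (Fin 2) ⧸ lam p n := QuotientGroup.mk (FreeGroup.of 1)
  have hgen : Subgroup.closure {u, v} = ⊤ := closure_mk_of_eq_top _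
  have hv : v ^ p ^ (n - 1) = 1 := by
    rw [← QuotientGroup.mk_pow, QuotientGroup.eq_one_iff]
    exact lam_antitone p (by omega) (pow_pow_mem_lam _ (n - 1))
  have hgen' : Subgroup.closure {u * v ^ 2, u * v ^ 4} = ⊤ :=
    top_le_iff.mp (hgen ▸ closure_pair_le_closure_mul_sq_mul_pow_four
      ((hp.odd_of_ne_two (by omega)).pow) hv)
  have hSigma : SigmaSet u v ∩ SigmaSet (u * v ^ 2) (u * v ^ 4) = {1} := by
    simp only [u, v, ← QuotientGroup.mk_pow, ← QuotientGroup.mk_mul]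
    refine SigmaSet_mk_inter_eq_one abelianize hp ?_
    rintro a (rfl | rfl | rfl) b (rfl | rfl | rfl) <;>
      exact hp.not_dvd_of_dvd_twelve hp5 (by norm_num [abelianize, det2])
  have hu : u ≠ 1 := by
    rw [Ne, QuotientGroup.eq_one_iff]
    intro h
    have := (dvd_toAdd_of_mem_lam abelianize (k := 1) (lam_antitone p hn h)).1
    simp only [pow_one, abelianize, FreeGroup.lift_apply_of, Matrix.cons_val_zero,
      toAdd_ofAdd] at this
    exact hp.not_dvd_one (by exact_mod_cast this)
  have hstruct : IsBeauvilleStructure u v (u * v ^ 2) (u * v ^ 4) := ⟨hgen, hgen', hSigma⟩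
  exact ⟨⟨finite_quotient_lam hp.pos n, ⟨u, 1, hu⟩, _, _, _, _, hstruct⟩, fun _ => hstruct⟩
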